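/- arXiv:1809.00936 — 2 statements merged into one kernel-verified Lean document; each statement's English description precedes it below -/
import Mathlib

section
/- For every p ≥ 1 and every probability measure μ on Y with finite p-th moment, W'_p(μ,0)^p = inf { W_p(μ,ξ)^p : ξ probability measure supported on ∂Y }, i.e. the cost of annihilating μ at the boundary equals the infimal Wasserstein distance to measures on the boundary. Moreover 2^{-1+1/p} W'_p(μ,0) ≤ W*_p(μ) ≤ W'_p(μ,0), where W*_p(μ) := (1/2) W*_p(μ,μ). -/
open MeasureTheory Metric Set
open scoped ENNReal NNReal

/-- `d*(x,y) := inf_{z ∈ X \ Y} (d(x,z) + d(z,y))`. -/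
noncomputable def dstar {X : Type*} [MetricSpace X] (Y : Set X) (x y : X) : ℝ :=
  ⨅ z : (Yᶜ : Set X), (dist x (z : X) + dist (z : X) y)

/-- Couplings of two measures. -/
def Cpl {α : Type*} [MeasurableSpace α] (μ ν : Measure α) : Set (Measure (α × α)) :=
  {q | q.map Prod.fst = μ ∧ q.map Prod.snd = ν}

/-- `p`-transportation cost of a plan `q` with respect to a cost function `c`. -/
noncomputable def tcost {α : Type*} [MeasurableSpace α] (c : α → α → ℝ) (p : ℝ)
    (q : Measure (α × α)) : ℝ≥0∞ :=
  ∫⁻ z, ENNReal.ofReal (c z.1 z.2 ^ p) ∂q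

/-- The `L^p`-transportation distance `W̃_p` between charged (sub)probability measures
`σ = (σ⁺,σ⁻)` and `τ = (τ⁺,τ⁻)`: infimum over decomposed couplings `q^{++},q^{+-},q^{-+},q^{--}`
with the appropriate marginals, transporting like charges at cost `d` and opposite charges at
cost `d*`. -/
noncomputable def Wtilde {X : Type*} [MetricSpace X] [MeasurableSpace X] (Y : Set X) (p : ℝ)
    (σ τ : Measure X × Measure X) : ℝ≥0∞ :=
  (⨅ Q : {Q : Measure (X × X) × Measure (X × X) × Measure (X × X) × Measure (X × X) //
        (Q.1 + Q.2.1).map Prod.fst = σ.1 ∧ (Q.2.2.1 + Q.2.2.2).map Prod.fst = σ.2 ∧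
        (Q.1 + Q.2.2.1).map Prod.snd = τ.1 ∧ (Q.2.1 + Q.2.2.2).map Prod.snd = τ.2},
      tcost (fun x y => dist x y) p Q.1.1 + tcost (dstar Y) p Q.1.2.1 +
        tcost (dstar Y) p Q.1.2.2.1 + tcost (fun x y => dist x y) p Q.1.2.2.2) ^ (1/p)

/-- The transportation-annihilation pre-distance `W⁰_p` between subprobabilities on `Y`. -/
noncomputable def W0 {X : Type*} [MetricSpace X] [MeasurableSpace X] (Y : Set X) (p : ℝ)
    (μ ν : Measure X) : ℝ≥0∞ :=
  ⨅ re : {re : Measure X × Measure X //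
      (μ + (2 : ℝ≥0∞) • re.1) Set.univ = 1 ∧ (ν + (2 : ℝ≥0∞) • re.2) Set.univ = 1},
    Wtilde Y p (μ + re.1.1, re.1.1) (ν + re.1.2, re.1.2)

/-- `W'_p(μ,0)^p = ∫ d'(x,∂)^p dμ`: the `p`-th power of the cost of annihilating `μ`
at the boundary via the shortcut metric. -/
noncomputable def WprimeZeroPow {X : Type*} [MetricSpace X] [MeasurableSpace X]
    (Y : Set X) (p : ℝ) (μ : Measure X) : ℝ≥0∞ :=
  ∫⁻ x, ENNReal.ofReal (infDist x Yᶜ ^ p) ∂μ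

/-- `W_p(μ,ν)^p`: the `p`-th power of the Kantorovich-Wasserstein distance. -/
noncomputable def WpPow {X : Type*} [MetricSpace X] [MeasurableSpace X] (p : ℝ)
    (μ ν : Measure X) : ℝ≥0∞ :=
  ⨅ q : Cpl μ ν, tcost (fun a b => dist a b) p q.1

/-- `W*_p(μ,ν)^p`: the `p`-th power of the transportation cost w.r.t. the meta-metric `d*`. -/
noncomputable def WstarPow {X : Type*} [MetricSpace X] [MeasurableSpace X] (Y : Set X) (p : ℝ)
    (μ ν : Measure X) : ℝ≥0∞ :=
  ⨅ q : Cpl μ ν, tcost (dstar Y) p q.1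

/-- The annihilation cost `W*_p(μ) := (1/2) W*_p(μ,μ)`. -/
noncomputable def Wstar {X : Type*} [MetricSpace X] [MeasurableSpace X] (Y : Set X) (p : ℝ)
    (μ : Measure X) : ℝ≥0∞ :=
  2⁻¹ * (WstarPow Y p μ μ) ^ (1/p)

/-- Approximate midpoint property: a characterization of length spaces. -/
def IsLengthDist {α : Type*} (d : α → α → ℝ) : Prop :=
  ∀ x y : α, ∀ ε > (0:ℝ), ∃ z : α, d x z ≤ d x y / 2 + ε ∧ d z y ≤ d x y / 2 + ε

/-!
Comparing `d*(x, y)` with `d'(x, ∂) + d'(y, ∂)` (always `≥`, and `≤ 2 d'(x, ∂)` on the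
diagonal), together with `a ^ p + b ^ p ≤ (a + b) ^ p`, bounds `W*_p(μ)` from both sides; the
upper bound uses the diagonal coupling of `μ` with itself.

For the identity, `∂Y ⊆ closure (X \ Y)`, so transporting `μ` onto `∂Y` costs at least
`∫ d'(x, ∂) ^ p dμ`. Conversely, in a complete length space the distance from `x ∈ Y` to `X \ Y`
is almost attained on `∂Y`: bisecting a segment from `Y` to its complement with approximate
midpoints converges to a boundary point. A measurable map sending each point to a point of `∂Y`
at most `c` times farther than the nearest one (`c > 1`), chosen from a dense sequence, then
pushes `μ` onto `∂Y` at cost `≤ c ^ p ∫ d'(x, ∂) ^ p dμ`.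
-/

open Filter Topology

section dstar

variable {X : Type*} [MetricSpace X] {Y : Set X}

theorem dstar_nonneg (x y : X) : 0 ≤ dstar Y x y :=
  Real.iInf_nonneg fun _ => by positivity

theorem dstar_le_dist_add_dist (x y : X) {z : X} (hz : z ∉ Y) :
    dstar Y x y ≤ dist x z + dist z y :=
  ciInf_le ⟨0, by rintro _ ⟨w, rfl⟩; positivity⟩ (⟨z, hz⟩ : (Yᶜ : Set X))

theorem infDist_add_infDist_le_dstar (hY : Yᶜ.Nonempty) (x y : X) :
    infDist x Yᶜ + infDist y Yᶜ ≤ dstar Y x y := by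
  have : Nonempty (Yᶜ : Set X) := hY.to_subtype
  refine le_ciInf fun z => ?_
  rw [dist_comm (z : X) y]
  exact add_le_add (infDist_le_dist_of_mem z.2) (infDist_le_dist_of_mem z.2)

theorem dstar_self_le (hY : Yᶜ.Nonempty) (x : X) : dstar Y x x ≤ 2 * infDist x Yᶜ := by
  refine le_of_forall_pos_lt_add fun ε hε => ?_
  obtain ⟨z, hz, hxz⟩ :=
    (infDist_lt_iff hY).mp (lt_add_of_pos_right (infDist x Yᶜ) (half_pos hε))
  calc dstar Y x x ≤ dist x z + dist z x := dstar_le_dist_add_dist x x hz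
    _ < 2 * infDist x Yᶜ + ε := by rw [dist_comm z x]; linarith

end dstar

section couplings

variable {α : Type*} [MeasurableSpace α] {μ ν : Measure α} {q : Measure (α × α)}

theorem lintegral_fst_of_mem_Cpl (hq : q ∈ Cpl μ ν) {f : α → ℝ≥0∞} (hf : Measurable f) :
    ∫⁻ z, f z.1 ∂q = ∫⁻ x, f x ∂μ := by
  rw [← hq.1, lintegral_map hf measurable_fst]

theorem lintegral_snd_of_mem_Cpl (hq : q ∈ Cpl μ ν) {f : α → ℝ≥0∞} (hf : Measurable f) :
    ∫⁻ z, f z.2 ∂q = ∫⁻ x, f x ∂ν := by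
  rw [← hq.2, lintegral_map hf measurable_snd]

theorem ae_snd_of_mem_Cpl (hq : q ∈ Cpl μ ν) {s : Set α} (hs : MeasurableSet s)
    (hν : ν sᶜ = 0) :
    ∀ᵐ z ∂q, z.2 ∈ s := by
  rw [ae_iff, ← hν, ← hq.2, Measure.map_apply measurable_snd hs.compl]
  rfl

theorem map_prodMk_mem_Cpl {T : α → α} (hT : Measurable T) (μ : Measure α) :
    μ.map (fun x => (x, T x)) ∈ Cpl μ (μ.map T) := by
  have hg : Measurable fun x => (x, T x) := measurable_id.prodMk hT
  exact ⟨by rw [Measure.map_map measurable_fst hg]; exact Measure.map_id,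
    by rw [Measure.map_map measurable_snd hg]; rfl⟩

theorem iInf_tcost_map_le (c : α → α → ℝ) (p : ℝ) {T : α → α} (hT : Measurable T)
    (μ : Measure α) :
    ⨅ q : Cpl μ (μ.map T), tcost c p q.1 ≤ ∫⁻ x, ENNReal.ofReal (c x (T x) ^ p) ∂μ :=
  (iInf_le _ ⟨_, map_prodMk_mem_Cpl hT μ⟩).trans
    (lintegral_map_le (fun z : α × α => ENNReal.ofReal (c z.1 z.2 ^ p)) _)

end couplings

section bounds

variable {X : Type*} [MetricSpace X] [MeasurableSpace X] {Y : Set X} {p : ℝ}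

theorem measurable_ofReal_infDist_rpow [BorelSpace X] (Y : Set X) (p : ℝ) :
    Measurable fun x => ENNReal.ofReal (infDist x Yᶜ ^ p) :=
  ((continuous_infDist_pt _).measurable.pow_const p).ennreal_ofReal

theorem WstarPow_self_le (hY : Yᶜ.Nonempty) (hp : 0 ≤ p) (μ : Measure X) :
    WstarPow Y p μ μ ≤ 2 ^ p * WprimeZeroPow Y p μ := by
  rw [show (2 : ℝ≥0∞) ^ p = ENNReal.ofReal (2 ^ p) by
    rw [← ENNReal.ofReal_rpow_of_pos two_pos, ENNReal.ofReal_ofNat]]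
  have hdiag := iInf_tcost_map_le (dstar Y) p measurable_id μ
  rw [Measure.map_id] at hdiag
  refine hdiag.trans ?_
  rw [WprimeZeroPow, ← lintegral_const_mul' _ _ ENNReal.ofReal_ne_top]
  refine lintegral_mono fun x => ?_
  rw [← ENNReal.ofReal_mul (by positivity), ← Real.mul_rpow zero_le_two infDist_nonneg]
  exact ENNReal.ofReal_le_ofReal
    (Real.rpow_le_rpow (dstar_nonneg x x) (dstar_self_le hY x) hp)

theorem two_mul_WprimeZeroPow_le_WstarPow [BorelSpace X] (hY : Yᶜ.Nonempty) (hp : 1 ≤ p)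
    (μ : Measure X) :
    2 * WprimeZeroPow Y p μ ≤ WstarPow Y p μ μ := by
  refine le_iInf fun ⟨q, hq⟩ => ?_
  have hf := measurable_ofReal_infDist_rpow Y p
  calc 2 * WprimeZeroPow Y p μ
      = ∫⁻ z, (ENNReal.ofReal (infDist z.1 Yᶜ ^ p) + ENNReal.ofReal (infDist z.2 Yᶜ ^ p)) ∂q := by
        rw [lintegral_add_left (f := fun z : X × X => ENNReal.ofReal (infDist z.1 Yᶜ ^ p))
          (hf.comp measurable_fst), lintegral_fst_of_mem_Cpl hq hf,
          lintegral_snd_of_mem_Cpl hq hf, two_mul, WprimeZeroPow]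
    _ ≤ tcost (dstar Y) p q := lintegral_mono fun z => by
        rw [← ENNReal.ofReal_add (Real.rpow_nonneg infDist_nonneg _)
          (Real.rpow_nonneg infDist_nonneg _)]
        refine ENNReal.ofReal_le_ofReal
          ((Real.add_rpow_le_rpow_add infDist_nonneg infDist_nonneg hp).trans ?_)
        exact Real.rpow_le_rpow (add_nonneg infDist_nonneg infDist_nonneg)
          (infDist_add_infDist_le_dstar hY _ _) (by linarith)

theorem WprimeZeroPow_le_WpPow [BorelSpace X] {μ ξ : Measure X} (hξ : ξ (frontier Y)ᶜ = 0)
    (hp : 0 ≤ p) :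
    WprimeZeroPow Y p μ ≤ WpPow p μ ξ := by
  refine le_iInf fun ⟨q, hq⟩ => ?_
  rw [WprimeZeroPow, ← lintegral_fst_of_mem_Cpl hq (measurable_ofReal_infDist_rpow Y p)]
  refine lintegral_mono_ae <| (ae_snd_of_mem_Cpl hq isClosed_frontier.measurableSet hξ).mono
    fun z hz => ENNReal.ofReal_le_ofReal (Real.rpow_le_rpow infDist_nonneg ?_ hp)
  rw [← infDist_closure]
  exact infDist_le_dist_of_mem (frontier_subset_closure (frontier_compl Y ▸ hz))

theorem Wstar_le (hY : Yᶜ.Nonempty) (hp : 0 < p) (μ : Measure X) :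
    Wstar Y p μ ≤ WprimeZeroPow Y p μ ^ (1 / p) := by
  calc Wstar Y p μ ≤ 2⁻¹ * (2 ^ p * WprimeZeroPow Y p μ) ^ (1 / p) :=
        mul_le_mul_right (ENNReal.rpow_le_rpow (WstarPow_self_le hY hp.le μ) (by positivity)) _
    _ = WprimeZeroPow Y p μ ^ (1 / p) := by
        rw [ENNReal.mul_rpow_of_nonneg _ _ (by positivity), ← ENNReal.rpow_mul,
          mul_one_div_cancel hp.ne', ENNReal.rpow_one, ← mul_assoc,
          ENNReal.inv_mul_cancel two_ne_zero ENNReal.ofNat_ne_top, one_mul]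

theorem le_Wstar [BorelSpace X] (hY : Yᶜ.Nonempty) (hp : 1 ≤ p) (μ : Measure X) :
    ENNReal.ofReal (2 ^ (-1 + 1 / p : ℝ)) * WprimeZeroPow Y p μ ^ (1 / p) ≤ Wstar Y p μ := by
  have hp' : 0 ≤ 1 / p := by positivity
  calc ENNReal.ofReal (2 ^ (-1 + 1 / p : ℝ)) * WprimeZeroPow Y p μ ^ (1 / p)
      = 2⁻¹ * (2 * WprimeZeroPow Y p μ) ^ (1 / p) := by
        rw [← ENNReal.ofReal_rpow_of_pos two_pos, ENNReal.ofReal_ofNat,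
          ENNReal.rpow_add _ _ two_ne_zero ENNReal.ofNat_ne_top, ENNReal.rpow_neg_one,
          ENNReal.mul_rpow_of_nonneg _ _ hp', mul_assoc]
    _ ≤ Wstar Y p μ :=
        mul_le_mul_right (ENNReal.rpow_le_rpow (two_mul_WprimeZeroPow_le_WstarPow hY hp μ) hp') _

end bounds

section frontier

variable {X : Type*} [MetricSpace X] {s : Set X}

theorem mem_frontier_of_tendsto_of_dist_tendsto_zero {A B : ℕ → X} {w : X}
    (hA : ∀ n, A n ∈ s) (hB : ∀ n, B n ∉ s) (hAw : Tendsto A atTop (𝓝 w))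
    (hAB : Tendsto (fun n => dist (A n) (B n)) atTop (𝓝 0)) : w ∈ frontier s := by
  rw [frontier_eq_closure_inter_closure]
  exact ⟨mem_closure_of_tendsto hAw (Eventually.of_forall hA),
    mem_closure_of_tendsto (hAw.congr_dist hAB) (Eventually.of_forall hB)⟩

namespace IsLengthDist

theorem exists_mem_notMem_dist_le (h : IsLengthDist (fun x y : X => dist x y)) {x y : X}
    (hx : x ∈ s) (hy : y ∉ s) {η : ℝ} (hη : 0 < η) :
    ∃ x' y', x' ∈ s ∧ y' ∉ s ∧ dist x x' ≤ 3 / 4 * dist x y ∧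
      dist x' y' ≤ 3 / 4 * dist x y ∧ dist x x' + dist x' y' ≤ dist x y + η := by
  have hxy : 0 < dist x y := dist_pos.mpr fun e => hy (e ▸ hx)
  obtain ⟨m, hxm, hmy⟩ := h x y (min (η / 2) (dist x y / 4)) (by positivity)
  have h₁ := min_le_left (η / 2) (dist x y / 4)
  have h₂ := min_le_right (η / 2) (dist x y / 4)
  by_cases hm : m ∈ s
  · exact ⟨m, y, hm, hy, by linarith, by linarith, by linarith⟩
  · exact ⟨x, m, hx, hm, by simp [hxy.le], by linarith, by simp only [dist_self]; linarith⟩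

theorem exists_mem_frontier_dist_le [CompleteSpace X]
    (h : IsLengthDist (fun x y : X => dist x y))
    {a b : X} (ha : a ∈ s) (hb : b ∉ s) {ε : ℝ} (hε : 0 < ε) :
    ∃ w ∈ frontier s, dist a w ≤ dist a b + ε := by
  have step : ∀ (x y : X) (n : ℕ), x ∈ s → y ∉ s → ∃ x' y', x' ∈ s ∧ y' ∉ s ∧
      dist x x' ≤ 3 / 4 * dist x y ∧ dist x' y' ≤ 3 / 4 * dist x y ∧
      dist x x' + dist x' y' ≤ dist x y + ε / 2 ^ (n + 1) :=
    fun x y n hx hy => h.exists_mem_notMem_dist_le hx hy (by positivity)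
  choose! f g hf hg hxx' hx'y' hsum using step
  let P : ℕ → X × X := fun n => Nat.rec (a, b) (fun n q => (f q.1 q.2 n, g q.1 q.2 n)) n
  have hmem : ∀ n, (P n).1 ∈ s ∧ (P n).2 ∉ s := fun n => by
    induction n with
    | zero => exact ⟨ha, hb⟩
    | succ n ih => exact ⟨hf _ _ n ih.1 ih.2, hg _ _ n ih.1 ih.2⟩
  have hD : ∀ n, dist (P n).1 (P n).2 ≤ dist a b * (3 / 4) ^ n := fun n => by
    induction n with
    | zero => simp [P]
    | succ n ih =>
      calc dist (P (n + 1)).1 (P (n + 1)).2 ≤ 3 / 4 * dist (P n).1 (P n).2 :=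
            hx'y' _ _ n (hmem n).1 (hmem n).2
        _ ≤ dist a b * (3 / 4) ^ (n + 1) := by rw [pow_succ]; linarith
  have hstep : ∀ n, dist (P n).1 (P (n + 1)).1 ≤ dist a b * (3 / 4) ^ n := fun n =>
    (hxx' _ _ n (hmem n).1 (hmem n).2).trans
      (by linarith [hD n, dist_nonneg (x := (P n).1) (y := (P n).2)])
  have hpot : ∀ n, dist a (P n).1 + dist (P n).1 (P n).2 + ε / 2 ^ n ≤ dist a b + ε := by
    intro n
    induction n with
    | zero => simp [P]
    | succ n ih =>
      linarith [hsum _ _ n (hmem n).1 (hmem n).2, dist_triangle a (P n).1 (P (n + 1)).1,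
        show ε / 2 ^ n = ε / 2 ^ (n + 1) + ε / 2 ^ (n + 1) by ring]
  obtain ⟨w, hw⟩ := cauchySeq_tendsto_of_complete
    (cauchySeq_of_le_geometric (3 / 4) (dist a b) (by norm_num) hstep)
  have hgeom := (tendsto_pow_atTop_nhds_zero_of_lt_one (r := (3 / 4 : ℝ)) (by norm_num)
    (by norm_num)).const_mul (dist a b)
  rw [mul_zero] at hgeom
  have hD0 := squeeze_zero (fun _ => dist_nonneg) hD hgeom
  refine ⟨w, mem_frontier_of_tendsto_of_dist_tendsto_zero (fun n => (hmem n).1)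
    (fun n => (hmem n).2) hw hD0, le_of_tendsto' (tendsto_const_nhds.dist hw) fun n => ?_⟩
  linarith [hpot n, dist_nonneg (x := (P n).1) (y := (P n).2),
    show 0 ≤ ε / 2 ^ n by positivity]

theorem infDist_frontier_le [CompleteSpace X]
    (h : IsLengthDist (fun x y : X => dist x y)) {x : X} (hx : x ∈ s) (hs : sᶜ.Nonempty) :
    infDist x (frontier s) ≤ infDist x sᶜ := by
  refine le_of_forall_pos_lt_add fun ε hε => ?_
  obtain ⟨b, hb, hxb⟩ :=
    (infDist_lt_iff hs).mp (lt_add_of_pos_right (infDist x sᶜ) (half_pos hε))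
  obtain ⟨w, hw, hxw⟩ := h.exists_mem_frontier_dist_le hx hb (half_pos hε)
  linarith [infDist_le_dist_of_mem (x := x) hw]

end IsLengthDist

theorem exists_measurable_mem_dist_le_mul_infDist [TopologicalSpace.SeparableSpace X]
    [MeasurableSpace X] [BorelSpace X] {F : Set X} (hF : IsClosed F) (hne : F.Nonempty)
    {c : ℝ} (hc : 1 < c) :
    ∃ T : X → X, Measurable T ∧ (∀ x, T x ∈ F) ∧ ∀ x, dist x (T x) ≤ c * infDist x F := by
  classical
  obtain ⟨t, htF, htc, hFt⟩ :=
    (TopologicalSpace.IsSeparable.of_separableSpace F).exists_countable_dense_subset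
  obtain ⟨u, rfl⟩ := htc.exists_eq_range (hne.mono hFt).of_closure
  have hnear : ∀ x, ∃ n, x ∈ F ∨ dist x (u n) < c * infDist x F := fun x => by
    by_cases hx : x ∈ F
    · exact ⟨0, Or.inl hx⟩
    have hpos : 0 < infDist x F := (hF.notMem_iff_infDist_pos hne).mp hx
    have : infDist x (range u) < c * infDist x F := by
      rw [← infDist_closure]
      exact (infDist_le_infDist_of_subset hFt hne).trans_lt (lt_mul_left hpos hc)
    obtain ⟨_, ⟨n, rfl⟩, hn⟩ := (infDist_lt_iff (hne.mono hFt).of_closure).mp this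
    exact ⟨n, Or.inr hn⟩
  have hS : Measurable fun x => u (Nat.find (hnear x)) :=
    Measurable.find (p := fun n x => x ∈ F ∨ dist x (u n) < c * infDist x F)
      (fun n => measurable_const) (fun n => hF.measurableSet.union
      (measurableSet_lt (measurable_id.dist measurable_const)
        (measurable_infDist.const_mul c))) hnear
  refine ⟨F.piecewise id fun x => u (Nat.find (hnear x)),
    Measurable.piecewise hF.measurableSet measurable_id hS, fun x => ?_, fun x => ?_⟩
  · by_cases hx : x ∈ F
    · simp [hx]
    · simpa [hx] using htF (mem_range_self _)
  · by_cases hx : x ∈ F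
    · simpa [hx] using mul_nonneg (by linarith : (0 : ℝ) ≤ c) infDist_nonneg
    · simpa [hx] using ((Nat.find_spec (hnear x)).resolve_left hx).le

end frontier

theorem le_of_forall_one_lt_le_ofReal_rpow_mul {a b : ℝ≥0∞} {p : ℝ}
    (h : ∀ c : ℝ, 1 < c → a ≤ ENNReal.ofReal (c ^ p) * b) : a ≤ b := by
  have hlim : Tendsto (fun c : ℝ => ENNReal.ofReal (c ^ p) * b) (𝓝[>] 1) (𝓝 b) := by
    have hcont : ContinuousAt (fun c : ℝ => ENNReal.ofReal (c ^ p)) 1 :=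
      ENNReal.continuous_ofReal.continuousAt.comp
        (Real.continuousAt_rpow_const 1 p (Or.inl one_ne_zero))
    simpa using ENNReal.Tendsto.mul_const (hcont.tendsto.mono_left nhdsWithin_le_nhds)
      (Or.inl (by simp))
  exact ge_of_tendsto hlim (eventually_nhdsWithin_of_forall h)

theorem iInf_WpPow_frontier_le_WprimeZeroPow {X : Type*} [MetricSpace X] [CompleteSpace X]
    [TopologicalSpace.SeparableSpace X] [MeasurableSpace X] [BorelSpace X]
    (hlength : IsLengthDist (fun x y : X => dist x y)) {Y : Set X} (hY : Y.Nonempty)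
    (hYc : Yᶜ.Nonempty) {p : ℝ} (hp : 0 ≤ p) (μ : Measure X) [IsProbabilityMeasure μ]
    (hμ : μ Yᶜ = 0) :
    ⨅ ξ : {ξ : Measure X // IsProbabilityMeasure ξ ∧ ξ (frontier Y)ᶜ = 0}, WpPow p μ ξ.1
      ≤ WprimeZeroPow Y p μ := by
  obtain ⟨a, ha⟩ := hY
  obtain ⟨b, hb⟩ := hYc
  obtain ⟨w, hw, -⟩ := hlength.exists_mem_frontier_dist_le ha hb one_pos
  refine le_of_forall_one_lt_le_ofReal_rpow_mul (p := p) fun c hc => ?_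
  obtain ⟨T, hT, hTF, hTc⟩ :=
    exists_measurable_mem_dist_le_mul_infDist isClosed_frontier ⟨w, hw⟩ hc
  have hξ : (μ.map T) (frontier Y)ᶜ = 0 := by
    rw [Measure.map_apply hT isClosed_frontier.measurableSet.compl, preimage_compl,
      show T ⁻¹' frontier Y = univ from eq_univ_of_forall hTF, compl_univ, measure_empty]
  refine (iInf_le _ ⟨μ.map T, Measure.isProbabilityMeasure_map hT.aemeasurable, hξ⟩).trans <|
    (iInf_tcost_map_le _ p hT μ).trans ?_
  rw [WprimeZeroPow, ← lintegral_const_mul' _ _ ENNReal.ofReal_ne_top]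
  refine lintegral_mono_ae <| (measure_eq_zero_iff_ae_notMem.mp hμ).mono fun x hx => ?_
  rw [← ENNReal.ofReal_mul (by positivity), ← Real.mul_rpow (by linarith) infDist_nonneg]
  refine ENNReal.ofReal_le_ofReal (Real.rpow_le_rpow dist_nonneg ((hTc x).trans ?_) hp)
  exact mul_le_mul_of_nonneg_left
    (hlength.infDist_frontier_le (not_not.mp hx) ⟨b, hb⟩) (by linarith)


theorem Wstar_vs_WprimeZero_general {X : Type*} [MetricSpace X] [CompleteSpace X]
    [TopologicalSpace.SeparableSpace X] [MeasurableSpace X] [BorelSpace X]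
    (hlength : IsLengthDist (fun x y : X => dist x y))
    (Y : Set X) (hYne : Y.Nonempty) (hYproper : Y ≠ Set.univ)
    (p : ℝ) (hp : 1 ≤ p) (μ : Measure X) (hprob : IsProbabilityMeasure μ)
    (hsupp : μ Yᶜ = 0) :
    WprimeZeroPow Y p μ =
      (⨅ ξ : {ξ : Measure X // IsProbabilityMeasure ξ ∧ ξ (frontier Y)ᶜ = 0},
        WpPow p μ ξ.1) ∧
    ENNReal.ofReal (2 ^ (-1 + 1/p : ℝ)) * (WprimeZeroPow Y p μ) ^ (1/p) ≤ Wstar Y p μ ∧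
    Wstar Y p μ ≤ (WprimeZeroPow Y p μ) ^ (1/p) := by
  have hYc : Yᶜ.Nonempty := nonempty_compl.mpr hYproper
  have hp₀ : 0 < p := zero_lt_one.trans_le hp
  refine ⟨le_antisymm ?_ ?_, le_Wstar hYc hp μ, Wstar_le hYc hp₀ μ⟩
  · exact le_iInf fun ξ => WprimeZeroPow_le_WpPow ξ.2.2 hp₀.le
  · exact iInf_WpPow_frontier_le_WprimeZeroPow hlength hYne hYc hp₀.le μ hsupp

/-- for `p ≥ 1` and a probability measure `μ` on `Y` with finite `p`-th moment,
`W'_p(μ,0)^p = inf { W_p(μ,ξ)^p : ξ ∈ P(∂Y) }` and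
`2^{-1+1/p} W'_p(μ,0) ≤ W*_p(μ) ≤ W'_p(μ,0)`. -/
theorem Wstar_vs_WprimeZero {X : Type*} [MetricSpace X] [CompleteSpace X]
    [TopologicalSpace.SeparableSpace X] [MeasurableSpace X] [BorelSpace X]
    (hlength : IsLengthDist (fun x y : X => dist x y))
    (Y : Set X) (hYopen : IsOpen Y) (hYne : Y.Nonempty) (hYproper : Y ≠ Set.univ)
    (p : ℝ) (hp : 1 ≤ p) (μ : Measure X) (hprob : IsProbabilityMeasure μ)
    (hsupp : μ Yᶜ = 0)
    (hmoment : ∃ x₀ : X, (∫⁻ x, ENNReal.ofReal (dist x x₀ ^ p) ∂μ) < ∞) :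
    WprimeZeroPow Y p μ =
      (⨅ ξ : {ξ : Measure X // IsProbabilityMeasure ξ ∧ ξ (frontier Y)ᶜ = 0},
        WpPow p μ ξ.1) ∧
    ENNReal.ofReal (2 ^ (-1 + 1/p : ℝ)) * (WprimeZeroPow Y p μ) ^ (1/p) ≤ Wstar Y p μ ∧
    Wstar Y p μ ≤ (WprimeZeroPow Y p μ) ^ (1/p) :=
  Wstar_vs_WprimeZero_general hlength Y hYne hYproper p hp μ hprob hsupp
end

section
/- Let X = ℝ, Y = (-2,2), μ = (1/(2n+1)) δ_{-1/2}, ν = (1/(2n+1)) δ_{1/2} for n ≥ 1 a natural number, and p > 1. Then W'_p(μ,ν)^p = 1/(2n+1), while W⁰_p(μ,ν) ≤ 1/(2n+1) < (1/(2n+1))^{1/p} = W'_p(μ,ν). In particular the inequality W'_1 ≤ W^♭_p can be strict. -/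
open MeasureTheory Metric Set
open scoped ENNReal NNReal

/-- Measurable structure on `Option α ≃ α ⊕ Unit`. -/
instance {α : Type*} [MeasurableSpace α] : MeasurableSpace (Option α) :=
  MeasurableSpace.comap (Equiv.optionEquivSumPUnit.{_, _} α) (inferInstance :
    MeasurableSpace (α ⊕ PUnit.{1}))

/-- The shortcut metric `d'` on `Y' = Y ∪ {∂}` (modelled as `Option X`, `none = ∂`):
`d'(x,y) = min (d x y) (d'(x,∂) + d'(y,∂))`, `d'(x,∂) = inf_{z ∈ X\Y} d(x,z)`. -/
noncomputable def shortcut {X : Type*} [MetricSpace X] (Y : Set X) :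
    Option X → Option X → ℝ
  | some x, some y => min (dist x y) (infDist x Yᶜ + infDist y Yᶜ)
  | some x, none => infDist x Yᶜ
  | none, some y => infDist y Yᶜ
  | none, none => 0

/-- Extension of a subprobability on `Y ⊆ X` to a probability on `Y' = Y ∪ {∂}`
by putting the missing mass at `∂`. -/
noncomputable def toProb {X : Type*} [MeasurableSpace X] (μ : Measure X) :
    Measure (Option X) :=
  μ.map some + (1 - μ Set.univ) • Measure.dirac none

/-- The Kantorovich-Wasserstein distance `W'_p` on subprobabilities over `Y`,
induced by the shortcut metric `d'` on `Y' = Y ∪ {∂}`. -/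
noncomputable def Wprime {X : Type*} [MetricSpace X] [MeasurableSpace X] (Y : Set X) (p : ℝ)
    (μ ν : Measure X) : ℝ≥0∞ :=
  (⨅ q : Cpl (toProb μ) (toProb ν),
      ∫⁻ z, ENNReal.ofReal (shortcut Y z.1 z.2 ^ p) ∂q.1) ^ (1/p)

/-!
The mass `1/(2n+1)` at `-1/2` has to be sent, under the shortcut metric on `Y ∪ {∂}`, either to
`1/2` or to `∂`, both at distance at least `1`; so `W'_p(μ,ν)^p = 1/(2n+1)`. Annihilation
changes this: adding `n` pairs of opposite charges of mass `1/(2n+1)` on the grid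
`g j = -1/2 + j/(2n+1)` turns `μ` and `ν` into alternating chains in which every positive charge
at `g (2k)` moves to `g (2k+1)` and every negative charge at `g (2k+2)` moves back to `g (2k+1)`.
All `2n+1` moves have length `1/(2n+1)`, so `W⁰_p(μ,ν) ≤ 1/(2n+1)`, which is strictly smaller
than its `p`-th root.
-/

section OptionMeasurable

variable {α : Type*} [MeasurableSpace α]

theorem measurable_optionEquivSumPUnit : Measurable (Equiv.optionEquivSumPUnit.{0, _} α) :=
  Measurable.of_comap_le le_rfl

theorem measurable_option_some : Measurable (some : α → Option α) := by
  rintro _ ⟨t, ht, rfl⟩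
  exact measurable_inl ht

instance {β : Type*} [MeasurableSpace β] [MeasurableSingletonClass α] [MeasurableSingletonClass β] :
    MeasurableSingletonClass (α ⊕ β) where
  measurableSet_singleton
    | .inl a => by simpa only [image_singleton] using (measurableSet_singleton a).inl_image
    | .inr b => by simpa only [image_singleton] using (measurableSet_singleton b).inr_image

instance [MeasurableSingletonClass α] : MeasurableSingletonClass (Option α) where
  measurableSet_singleton o := by
    rw [← (Equiv.optionEquivSumPUnit.{0, _} α).injective.preimage_image {o}, image_singleton]
    exact (measurableSet_singleton _).preimage measurable_optionEquivSumPUnit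

end OptionMeasurable

section Discrete

variable {α ι : Type*} [MeasurableSpace α]

theorem map_fst_sum_smul_dirac (s : Finset ι) (w : ι → ℝ≥0∞) (x y : ι → α) :
    (∑ i ∈ s, w i • Measure.dirac (x i, y i)).map Prod.fst =
      ∑ i ∈ s, w i • Measure.dirac (x i) := by
  rw [← Measure.mapₗ_apply_of_measurable measurable_fst, map_sum]
  simp only [Measure.mapₗ_apply_of_measurable measurable_fst, Measure.map_smul,
    Measure.map_dirac' measurable_fst]

theorem map_snd_sum_smul_dirac (s : Finset ι) (w : ι → ℝ≥0∞) (x y : ι → α) :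
    (∑ i ∈ s, w i • Measure.dirac (x i, y i)).map Prod.snd =
      ∑ i ∈ s, w i • Measure.dirac (y i) := by
  rw [← Measure.mapₗ_apply_of_measurable measurable_snd, map_sum]
  simp only [Measure.mapₗ_apply_of_measurable measurable_snd, Measure.map_smul,
    Measure.map_dirac' measurable_snd]

@[simp]
theorem tcost_zero (c : α → α → ℝ) (p : ℝ) : tcost c p 0 = 0 :=
  lintegral_zero_measure _

theorem tcost_sum_smul_dirac [MeasurableSingletonClass α] (c : α → α → ℝ) (p : ℝ)
    (s : Finset ι) (w : ι → ℝ≥0∞) (x y : ι → α) :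
    tcost c p (∑ i ∈ s, w i • Measure.dirac (x i, y i)) =
      ∑ i ∈ s, w i * ENNReal.ofReal (c (x i) (y i) ^ p) := by
  simp only [tcost, lintegral_finsetSum_measure, lintegral_smul_measure, lintegral_dirac,
    smul_eq_mul]

end Discrete

theorem toProb_smul_dirac {X : Type*} [MeasurableSpace X] (c : ℝ≥0∞) (x : X) :
    toProb (c • Measure.dirac x) = c • Measure.dirac (some x) + (1 - c) • Measure.dirac none := by
  simp [toProb, Measure.map_dirac' measurable_option_some]

theorem mul_le_lintegral_of_mem_Cpl {α : Type*} [MeasurableSpace α] {μ ν : Measure α}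
    {q : Measure (α × α)} (hq : q ∈ Cpl μ ν) {s t : Set α} (hs : MeasurableSet s)
    (ht : MeasurableSet t) (hνt : ν tᶜ = 0) {f : α × α → ℝ≥0∞} {m : ℝ≥0∞}
    (hf : ∀ x ∈ s, ∀ y ∈ t, m ≤ f (x, y)) :
    μ s * m ≤ ∫⁻ z, f z ∂q := by
  have hst : μ s ≤ q (s ×ˢ t) := by
    have hnull : q (Prod.snd ⁻¹' tᶜ) = 0 := by
      rw [← Measure.map_apply measurable_snd ht.compl, hq.2, hνt]
    calc μ s = q (Prod.fst ⁻¹' s) := by rw [← hq.1, Measure.map_apply measurable_fst hs]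
      _ ≤ q (s ×ˢ t ∪ Prod.snd ⁻¹' tᶜ) := measure_mono fun z hz => by
          by_cases hzt : z.2 ∈ t
          exacts [Or.inl ⟨hz, hzt⟩, Or.inr hzt]
      _ ≤ q (s ×ˢ t) := (measure_union_le _ _).trans_eq (by rw [hnull, add_zero])
  calc μ s * m ≤ ∫⁻ _ in s ×ˢ t, m ∂q := by
        rw [setLIntegral_const, mul_comm]
        gcongr
    _ ≤ ∫⁻ z in s ×ˢ t, f z ∂q := setLIntegral_mono' (hs.prod ht) fun z hz => hf _ hz.1 _ hz.2
    _ ≤ ∫⁻ z, f z ∂q := setLIntegral_le_lintegral _ _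

theorem Wprime_smul_dirac {X : Type*} [MetricSpace X] [MeasurableSpace X]
    [MeasurableSingletonClass X] (Y : Set X) {p : ℝ} (hp : 0 < p) (c : ℝ≥0∞) {x y : X}
    (hxy : shortcut Y (some x) (some y) ≤ infDist x Yᶜ) :
    Wprime Y p (c • Measure.dirac x) (c • Measure.dirac y) =
      (c * ENNReal.ofReal (shortcut Y (some x) (some y) ^ p)) ^ (1 / p) := by
  set d := shortcut Y (some x) (some y)
  have hd : 0 ≤ d := le_min dist_nonneg (add_nonneg infDist_nonneg infDist_nonneg)
  rw [Wprime, toProb_smul_dirac, toProb_smul_dirac]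
  congr 1
  apply le_antisymm
  · set q := c • Measure.dirac (some x, some y) +
      (1 - c) • Measure.dirac ((none, none) : Option X × Option X)
    have hq : q ∈ Cpl (c • Measure.dirac (some x) + (1 - c) • Measure.dirac none)
        (c • Measure.dirac (some y) + (1 - c) • Measure.dirac none) := by
      constructor <;>
      simp only [q, Measure.map_add _ _ measurable_fst, Measure.map_add _ _ measurable_snd,
        Measure.map_smul, Measure.map_dirac' measurable_fst, Measure.map_dirac' measurable_snd]
    refine (iInf_le _ ⟨q, hq⟩).trans_eq ?_
    simp [q, lintegral_add_measure, shortcut, Real.zero_rpow hp.ne', d]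
  · refine le_iInf fun q => le_trans (le_of_eq ?_) (mul_le_lintegral_of_mem_Cpl q.2
      (measurableSet_singleton (some x)) ((measurableSet_singleton none).insert (some y))
      (m := ENNReal.ofReal (d ^ p)) ?_ ?_)
    · simp
    · simp
    · rintro _ rfl _ (rfl | rfl)
      · exact le_rfl
      · exact ENNReal.ofReal_le_ofReal (Real.rpow_le_rpow hd hxy hp.le)

theorem Wtilde_le_of_mem_Cpl {X : Type*} [MetricSpace X] [MeasurableSpace X] (Y : Set X)
    {p : ℝ} (hp : 0 ≤ p) {σ τ : Measure X × Measure X} {qp qn : Measure (X × X)}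
    (hqp : qp ∈ Cpl σ.1 τ.1) (hqn : qn ∈ Cpl σ.2 τ.2) :
    Wtilde Y p σ τ ≤
      (tcost (fun x y => dist x y) p qp + tcost (fun x y => dist x y) p qn) ^ (1 / p) := by
  have hQ : (qp + 0).map Prod.fst = σ.1 ∧ (0 + qn).map Prod.fst = σ.2 ∧
      (qp + 0).map Prod.snd = τ.1 ∧ (0 + qn).map Prod.snd = τ.2 := by
    simpa using ⟨hqp.1, hqn.1, hqp.2, hqn.2⟩
  refine (ENNReal.rpow_le_rpow (iInf_le _ ⟨(qp, 0, 0, qn), hQ⟩) (by positivity)).trans_eq ?_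
  simp

theorem W0_le_Wtilde {X : Type*} [MetricSpace X] [MeasurableSpace X] (Y : Set X) (p : ℝ)
    {μ ν ρ η : Measure X} (hρ : (μ + (2 : ℝ≥0∞) • ρ) univ = 1)
    (hη : (ν + (2 : ℝ≥0∞) • η) univ = 1) :
    W0 Y p μ ν ≤ Wtilde Y p (μ + ρ, ρ) (ν + η, η) :=
  iInf_le_of_le ⟨(ρ, η), hρ, hη⟩ le_rfl

theorem tcost_dist_sum_smul_dirac_le {X ι : Type*} [MetricSpace X] [MeasurableSpace X]
    [MeasurableSingletonClass X] {p : ℝ} (hp : 0 ≤ p) (s : Finset ι) (c : ℝ≥0∞) {x y : ι → X}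
    {h : ℝ} (hxy : ∀ i ∈ s, dist (x i) (y i) ≤ h) :
    tcost (fun x y => dist x y) p (∑ i ∈ s, c • Measure.dirac (x i, y i)) ≤
      s.card * (c * ENNReal.ofReal (h ^ p)) := by
  rw [tcost_sum_smul_dirac, ← nsmul_eq_mul, ← Finset.sum_const]
  gcongr with i hi
  exact hxy i hi

theorem W0_smul_dirac_le_of_chain {X : Type*} [MetricSpace X] [MeasurableSpace X]
    [MeasurableSingletonClass X] (Y : Set X) {p : ℝ} (hp : 0 < p) {g : ℕ → X} {h : ℝ}
    (hg : ∀ j, dist (g j) (g (j + 1)) ≤ h) {n : ℕ} {c : ℝ≥0∞} (hc : (2 * n + 1) * c = 1) :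
    W0 Y p (c • Measure.dirac (g 0)) (c • Measure.dirac (g (2 * n + 1))) ≤ ENNReal.ofReal h := by
  have hmass : ∀ (x : X) (f : ℕ → X),
      (c • Measure.dirac x + (2 : ℝ≥0∞) • ∑ k ∈ Finset.range n, c • Measure.dirac (f k)) univ =
        1 := by
    intro x f
    simp only [Measure.coe_add, Measure.coe_smul, Measure.coe_finsetSum, Pi.add_apply,
      Pi.smul_apply, measure_univ, smul_eq_mul, mul_one, Finset.sum_apply, Finset.sum_const,
      Finset.card_range, nsmul_eq_mul]
    rw [← hc]
    ring
  have hpos : c • Measure.dirac (g 0) + ∑ k ∈ Finset.range n, c • Measure.dirac (g (2 * k + 2)) =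
      ∑ k ∈ Finset.range (n + 1), c • Measure.dirac (g (2 * k)) := by
    simp only [Finset.sum_range_succ', add_comm, mul_add, mul_zero, mul_one]
  have hneg : c • Measure.dirac (g (2 * n + 1)) +
      ∑ k ∈ Finset.range n, c • Measure.dirac (g (2 * k + 1)) =
        ∑ k ∈ Finset.range (n + 1), c • Measure.dirac (g (2 * k + 1)) := by
    rw [Finset.sum_range_succ, add_comm]
  have hcost_pos := tcost_dist_sum_smul_dirac_le hp.le (Finset.range (n + 1)) c
    (x := fun k => g (2 * k)) (y := fun k => g (2 * k + 1)) fun k _ => hg (2 * k)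
  have hcost_neg := tcost_dist_sum_smul_dirac_le hp.le (Finset.range n) c
    (x := fun k => g (2 * k + 2)) (y := fun k => g (2 * k + 1))
    fun k _ => (dist_comm _ _).trans_le (hg (2 * k + 1))
  have hh : 0 ≤ h := dist_nonneg.trans (hg 0)
  calc _ ≤ Wtilde Y p _ _ := W0_le_Wtilde Y p (hmass _ _) (hmass _ _)
    _ ≤ _ := Wtilde_le_of_mem_Cpl Y hp.le
        ⟨(map_fst_sum_smul_dirac _ _ _ _).trans hpos.symm,
          (map_snd_sum_smul_dirac _ _ _ _).trans hneg.symm⟩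
        ⟨map_fst_sum_smul_dirac _ _ _ _, map_snd_sum_smul_dirac _ _ _ _⟩
    _ ≤ ((n + 1 + n) * (c * ENNReal.ofReal (h ^ p))) ^ (1 / p) := by
        rw [add_mul]
        gcongr
        · simpa using hcost_pos
        · simpa using hcost_neg
    _ = ENNReal.ofReal h := by
        rw [← mul_assoc, show (n + 1 + n : ℝ≥0∞) = 2 * n + 1 by ring, hc, one_mul,
          ENNReal.ofReal_rpow_of_nonneg (by positivity) (by positivity), one_div,
          Real.rpow_rpow_inv hh hp.ne']

theorem ENNReal.self_lt_rpow_of_lt_one {x : ℝ≥0∞} {y : ℝ} (h₁ : 0 < x) (h₂ : x < 1)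
    (h₃ : y < 1) : x < x ^ y :=
  calc x = x ^ (1 : ℝ) := (ENNReal.rpow_one x).symm
    _ < x ^ y := ENNReal.rpow_lt_rpow_of_exponent_gt h₁ h₂ h₃

theorem sub_dist_le_infDist_compl_ball {X : Type*} [PseudoMetricSpace X] {x z : X} {r : ℝ}
    (h : (ball z r)ᶜ.Nonempty) : r - dist x z ≤ infDist x (ball z r)ᶜ :=
  (le_infDist h).2 fun y hy => by
    linarith [not_lt.1 (mt mem_ball.2 hy), dist_triangle y x z, dist_comm x y]

theorem sub_abs_le_infDist_compl_Ioo (x r : ℝ) : r - |x| ≤ infDist x (Ioo (-r) r)ᶜ := by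
  have hball : Ioo (-r) r = ball 0 r := by simp [Real.ball_eq_Ioo]
  rw [hball, ← Real.dist_0_eq_abs]
  exact sub_dist_le_infDist_compl_ball ⟨|r|, by simp [le_abs_self]⟩

theorem infDist_neg_half_compl_Ioo : 3 / 2 ≤ infDist (-(1 / 2) : ℝ) (Ioo (-2) 2)ᶜ := by
  have := sub_abs_le_infDist_compl_Ioo (-(1 / 2)) 2
  norm_num at this ⊢
  linarith

theorem shortcut_neg_half_half :
    shortcut (Ioo (-2 : ℝ) 2) (some (-(1 / 2))) (some (1 / 2)) = 1 := by
  have h₁ := sub_abs_le_infDist_compl_Ioo (-(1 / 2)) 2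
  have h₂ := sub_abs_le_infDist_compl_Ioo (1 / 2) 2
  have hdist : dist (-(1 / 2) : ℝ) (1 / 2) = 1 := by norm_num [Real.dist_eq]
  norm_num at h₁ h₂
  exact (min_eq_left (by linarith)).trans hdist

theorem W0_smul_dirac_neg_half_half_le (Y : Set ℝ) {p : ℝ} (hp : 0 < p) (n : ℕ) :
    W0 Y p ((2 * (n : ℝ≥0∞) + 1)⁻¹ • Measure.dirac (-(1 / 2)))
        ((2 * (n : ℝ≥0∞) + 1)⁻¹ • Measure.dirac (1 / 2)) ≤ (2 * (n : ℝ≥0∞) + 1)⁻¹ := by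
  set g : ℕ → ℝ := fun j => -(1 / 2) + j / (2 * n + 1)
  have hg : ∀ j, dist (g j) (g (j + 1)) ≤ 1 / (2 * n + 1) := by
    intro j
    have hstep : g (j + 1) = g j + 1 / (2 * n + 1) := by
      simp only [g]
      push_cast
      ring
    rw [hstep, dist_self_add_right, Real.norm_of_nonneg (by positivity)]
  have hg₀ : g 0 = -(1 / 2) := by simp [g]
  have hg₁ : g (2 * n + 1) = 1 / 2 := by
    simp only [g]
    push_cast
    field_simp
    ring
  have hc : (2 * n + 1) * (2 * (n : ℝ≥0∞) + 1)⁻¹ = 1 :=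
    ENNReal.mul_inv_cancel (by positivity) (by finiteness)
  have hofReal : ENNReal.ofReal (1 / (2 * n + 1)) = (2 * (n : ℝ≥0∞) + 1)⁻¹ := by
    rw [one_div, ENNReal.ofReal_inv_of_pos (by positivity)]
    norm_cast
  rw [← hg₀, ← hg₁]
  exact (W0_smul_dirac_le_of_chain Y hp hg hc).trans_eq hofReal

/-- for `X = ℝ`, `Y = (-2,2)`, `μ = (2n+1)⁻¹ δ_{-1/2}`, `ν = (2n+1)⁻¹ δ_{1/2}`,
`n ≥ 1`, `p > 1`: `W'_p(μ,ν)^p = 1/(2n+1)` while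
`W⁰_p(μ,ν) ≤ 1/(2n+1) < (1/(2n+1))^{1/p} = W'_p(μ,ν)`. -/
theorem W0_lt_Wprime (n : ℕ) (hn : 1 ≤ n) (p : ℝ) (hp : 1 < p) :
    Wprime (Set.Ioo (-2:ℝ) 2) p
        ((2 * (n : ℝ≥0∞) + 1)⁻¹ • Measure.dirac (-(1/2) : ℝ))
        ((2 * (n : ℝ≥0∞) + 1)⁻¹ • Measure.dirac ((1/2) : ℝ)) =
      ((2 * (n : ℝ≥0∞) + 1)⁻¹) ^ (1/p) ∧
    W0 (Set.Ioo (-2:ℝ) 2) p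
        ((2 * (n : ℝ≥0∞) + 1)⁻¹ • Measure.dirac (-(1/2) : ℝ))
        ((2 * (n : ℝ≥0∞) + 1)⁻¹ • Measure.dirac ((1/2) : ℝ)) ≤
      (2 * (n : ℝ≥0∞) + 1)⁻¹ ∧
    (2 * (n : ℝ≥0∞) + 1)⁻¹ < ((2 * (n : ℝ≥0∞) + 1)⁻¹) ^ (1/p) := by
  have hp₀ : 0 < p := one_pos.trans hp
  refine ⟨?_, W0_smul_dirac_neg_half_half_le _ hp₀ n, ?_⟩
  · have hclose : shortcut (Ioo (-2 : ℝ) 2) (some (-(1 / 2))) (some (1 / 2)) ≤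
        infDist (-(1 / 2) : ℝ) (Ioo (-2) 2)ᶜ := by
      linarith [shortcut_neg_half_half, infDist_neg_half_compl_Ioo]
    rw [Wprime_smul_dirac _ hp₀ _ hclose, shortcut_neg_half_half]
    simp
  · refine ENNReal.self_lt_rpow_of_lt_one (ENNReal.inv_pos.2 (by finiteness))
      (ENNReal.inv_lt_one.2 ?_) ((div_lt_one hp₀).2 hp)
    exact_mod_cast (by omega : 1 < 2 * n + 1)
end
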